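/- arXiv:1705.02969 — 3 statements merged into one kernel-verified Lean document; each statement's English description precedes it below -/
import Mathlib

section
/- Let λ ∈ (0,1), φ > 0 with λ + φ < 1, δ ≥ 0, β ≥ 0, ζ ∈ (0,1), and let {v_t}_{t ≥ t₀} be a nonnegative sequence satisfying v_{t+1} ≤ (λ + δζ^t) v_t + βζ^t for all t ≥ t₀, where t₀ is such that δζ^{t₀} ≤ φ. Then for all t ≥ t₀: v_{t+1} ≤ (λ + φ)^{t+1−t₀} v_{t₀} + β ∑_{τ=0}^{t−t₀} (λ + φ)^τ ζ^{t−τ}. -/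
/-!
Because `ζ ≤ 1`, the perturbation `δ ζ^t` stays below `δ ζ^{t₀} ≤ φ` for every `t ≥ t₀`, so the
recursion is dominated by the linear one `v_{t+1} ≤ (l + φ) v_t + β ζ^t`, which unrolls to the
claimed bound.
-/

open Finset

theorem le_pow_mul_add_sum_of_le_mul_add {R : Type*} [CommSemiring R] [PartialOrder R]
    [IsOrderedRing R] {q : R} (hq : 0 ≤ q) {u f : ℕ → R} {t₀ : ℕ}
    (h : ∀ t, t₀ ≤ t → u (t + 1) ≤ q * u t + f t) (n : ℕ) :
    u (t₀ + n + 1) ≤ q ^ (n + 1) * u t₀ + ∑ τ ∈ range (n + 1), q ^ τ * f (t₀ + n - τ) := by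
  induction n with
  | zero => simpa using h t₀ le_rfl
  | succ n ih =>
    have hsum : ∑ τ ∈ range (n + 2), q ^ τ * f (t₀ + (n + 1) - τ)
        = q * ∑ τ ∈ range (n + 1), q ^ τ * f (t₀ + n - τ) + f (t₀ + (n + 1)) := by
      rw [sum_range_succ', mul_sum]
      simp only [← add_assoc, Nat.add_sub_add_right, pow_succ', mul_assoc, pow_zero, one_mul,
        Nat.sub_zero]
    calc u (t₀ + (n + 1) + 1)
        ≤ q * u (t₀ + n + 1) + f (t₀ + (n + 1)) := h _ (Nat.le_add_right _ _)
      _ ≤ q * (q ^ (n + 1) * u t₀ + ∑ τ ∈ range (n + 1), q ^ τ * f (t₀ + n - τ))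
            + f (t₀ + (n + 1)) := by gcongr
      _ = q ^ (n + 1 + 1) * u t₀ + ∑ τ ∈ range (n + 1 + 1), q ^ τ * f (t₀ + (n + 1) - τ) := by
        rw [hsum, pow_succ']; ring

theorem recursion_lemma_strongly_convex_general
    (l φ δ β ζ : ℝ) (hl0 : 0 < l) (hφ : 0 < φ)
    (hδ : 0 ≤ δ) (hζ0 : 0 < ζ) (hζ1 : ζ < 1)
    (t₀ : ℕ) (hδζ : δ * ζ ^ t₀ ≤ φ)
    (v : ℕ → ℝ) (hv0 : ∀ t, t₀ ≤ t → 0 ≤ v t)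
    (hrec : ∀ t, t₀ ≤ t → v (t + 1) ≤ (l + δ * ζ ^ t) * v t + β * ζ ^ t) :
    ∀ t, t₀ ≤ t →
      v (t + 1) ≤ (l + φ) ^ (t + 1 - t₀) * v t₀
        + β * ∑ τ ∈ Finset.range (t - t₀ + 1), (l + φ) ^ τ * ζ ^ (t - τ) := by
  have hstep : ∀ t, t₀ ≤ t → v (t + 1) ≤ (l + φ) * v t + β * ζ ^ t := fun t ht => by
    have hδζt : δ * ζ ^ t ≤ φ :=
      (mul_le_mul_of_nonneg_left (pow_le_pow_of_le_one hζ0.le hζ1.le ht) hδ).trans hδζ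
    calc v (t + 1) ≤ (l + δ * ζ ^ t) * v t + β * ζ ^ t := hrec t ht
      _ ≤ (l + φ) * v t + β * ζ ^ t := by gcongr; exact hv0 t ht
  intro t ht
  obtain ⟨n, rfl⟩ := Nat.exists_eq_add_of_le ht
  rw [show t₀ + n + 1 - t₀ = n + 1 by omega, Nat.add_sub_cancel_left, mul_sum]
  simpa only [mul_left_comm β] using
    le_pow_mul_add_sum_of_le_mul_add (by positivity) hstep n

/-- Deterministic recursion lemma: if `v_{t+1} ≤ (l + δζ^t) v_t + βζ^t` for `t ≥ t₀` with
`δζ^{t₀} ≤ φ`, then `v_{t+1} ≤ (l+φ)^{t+1-t₀} v_{t₀} + β ∑_{τ=0}^{t-t₀} (l+φ)^τ ζ^{t-τ}`. -/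
theorem recursion_lemma_strongly_convex
    (l φ δ β ζ : ℝ) (hl0 : 0 < l) (hl1 : l < 1) (hφ : 0 < φ) (hlφ : l + φ < 1)
    (hδ : 0 ≤ δ) (hβ : 0 ≤ β) (hζ0 : 0 < ζ) (hζ1 : ζ < 1)
    (t₀ : ℕ) (hδζ : δ * ζ ^ t₀ ≤ φ)
    (v : ℕ → ℝ) (hv0 : ∀ t, t₀ ≤ t → 0 ≤ v t)
    (hrec : ∀ t, t₀ ≤ t → v (t + 1) ≤ (l + δ * ζ ^ t) * v t + β * ζ ^ t) :
    ∀ t, t₀ ≤ t →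
      v (t + 1) ≤ (l + φ) ^ (t + 1 - t₀) * v t₀
        + β * ∑ τ ∈ Finset.range (t - t₀ + 1), (l + φ) ^ τ * ζ ^ (t - τ) :=
  recursion_lemma_strongly_convex_general l φ δ β ζ hl0 hφ hδ hζ0 hζ1 t₀ hδζ v hv0 hrec
end

section
/- Let X ⊆ ℝ^d be closed convex, f : ℝ^d → ℝ differentiable convex with L-Lipschitz gradient, φ : X → ℝ convex, g = f + φ with minimizer x* ∈ X of g over X. Fix y ∈ X, a vector G ∈ ℝ^d (an inexact gradient), α ∈ (0, 1/L), and let z = argmin_{x ∈ X} { f(y) + ⟨G, x − y⟩ + (1/(2α))‖x − y‖² + φ(x) }. Set ε = G − ∇f(y). Then for every x ∈ X: g(z) ≤ g(x) + (1/(2α))‖x − y‖² − (1/(2α))‖x − z‖² + ((L − 1/α)/2)‖z − y‖² + ⟨ε, x − z⟩. -/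
open Real
open scoped RealInnerProductSpace

/-!
The proximal objective `h u = ⟪G, u - y⟫ + ‖u - y‖² / (2α) + φ u` is `1/α`-strongly convex on `X`,
so its minimiser `z` satisfies the quadratic-growth (three-point) inequality
`h z + ‖x - z‖² / (2α) ≤ h x`. Adding the descent lemma `f z ≤ f y + ⟪∇f y, z - y⟫ + L/2 ‖z - y‖²`
and the first-order convexity inequality `f y + ⟪∇f y, x - y⟫ ≤ f x` gives the claim, the error
`ε = G - ∇f y` entering through the linear terms.
-/

open Set Filter Topology

section NormedSpace

variable {F : Type*} [NormedAddCommGroup F] [NormedSpace ℝ F]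

lemma StrongConvexOn.add_convexOn {s : Set F} {m : ℝ} {f g : F → ℝ} (hf : StrongConvexOn s m f)
    (hg : ConvexOn ℝ s g) : StrongConvexOn s m (f + g) := by
  simpa [StrongConvexOn] using hf.add (uniformConvexOn_zero.2 hg)

lemma StrongConvexOn.add_half_mul_sq_norm_sub_le_of_isMinOn {s : Set F} {m : ℝ} {h : F → ℝ}
    {z x : F} (hh : StrongConvexOn s m h) (hmin : IsMinOn h s z) (hz : z ∈ s) (hx : x ∈ s) :
    h z + m / 2 * ‖x - z‖ ^ 2 ≤ h x := by
  -- compare `z` with the points `(1 - t) • z + t • x` and let `t → 0⁺`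
  have hsegment : ∀ t ∈ Ioc (0 : ℝ) 1, h z + (1 - t) * (m / 2 * ‖x - z‖ ^ 2) ≤ h x := by
    rintro t ⟨ht0, ht1⟩
    have hconv := hh.2 hz hx (sub_nonneg.2 ht1) ht0.le (sub_add_cancel 1 t)
    have hle : h z ≤ h ((1 - t) • z + t • x) :=
      hmin (hh.1 hz hx (sub_nonneg.2 ht1) ht0.le (sub_add_cancel 1 t))
    rw [norm_sub_rev, smul_eq_mul, smul_eq_mul] at hconv
    beta_reduce at hconv
    have : t * (h z + (1 - t) * (m / 2 * ‖x - z‖ ^ 2)) ≤ t * h x := by linarith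
    exact le_of_mul_le_mul_left this ht0
  have hlim : Tendsto (fun t : ℝ => h z + (1 - t) * (m / 2 * ‖x - z‖ ^ 2)) (𝓝[>] 0)
      (𝓝 (h z + m / 2 * ‖x - z‖ ^ 2)) := by
    have hcont : Continuous fun t : ℝ => h z + (1 - t) * (m / 2 * ‖x - z‖ ^ 2) := by fun_prop
    simpa using (hcont.tendsto 0).mono_left nhdsWithin_le_nhds
  exact le_of_tendsto hlim (eventually_of_mem (Ioc_mem_nhdsGT one_pos) hsegment)

end NormedSpace

variable {E : Type*} [NormedAddCommGroup E] [InnerProductSpace ℝ E]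

lemma strongConvexOn_half_mul_sq_norm_sub {s : Set E} (hs : Convex ℝ s) (m : ℝ) (y : E) :
    StrongConvexOn s m fun u => m / 2 * ‖u - y‖ ^ 2 := by
  rw [strongConvexOn_iff_convex]
  refine ⟨hs, fun u _ v _ a b _ _ hab => le_of_eq ?_⟩
  obtain rfl := eq_sub_of_add_eq hab
  simp only [norm_sub_sq_real, inner_add_left, real_inner_smul_left, smul_eq_mul]
  ring

lemma convexOn_inner_sub {s : Set E} (hs : Convex ℝ s) (G y : E) :
    ConvexOn ℝ s fun u => ⟪G, u - y⟫ := by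
  refine ⟨hs, fun u _ v _ a b _ _ hab => le_of_eq ?_⟩
  obtain rfl := eq_sub_of_add_eq hab
  simp only [inner_sub_right, inner_add_right, real_inner_smul_right, smul_eq_mul]
  ring

variable [CompleteSpace E]

lemma HasGradientAt.hasDerivAt_comp_add_smul {f : E → ℝ} {f' a v : E} {t : ℝ}
    (hf : HasGradientAt f f' (a + t • v)) :
    HasDerivAt (fun s : ℝ => f (a + s • v)) ⟪f', v⟫ t := by
  have hline : HasDerivAt (fun s : ℝ => a + s • v) v t := by
    simpa using ((hasDerivAt_id t).smul_const v).const_add a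
  simpa [Function.comp_def] using (hasGradientAt_iff_hasFDerivAt.mp hf).comp_hasDerivAt t hline

lemma ConvexOn.add_inner_le_of_hasGradientAt {f : E → ℝ} {f' a : E} (hf : ConvexOn ℝ univ f)
    (hgrad : HasGradientAt f f' a) (b : E) : f a + ⟪f', b - a⟫ ≤ f b := by
  have hline : ConvexOn ℝ univ fun s : ℝ => f (a + s • (b - a)) := by
    simpa [Function.comp_def, AffineMap.lineMap_apply_module', add_comm] using!
      hf.comp_affineMap (AffineMap.lineMap a b)
  have hderiv : HasDerivAt (fun s : ℝ => f (a + s • (b - a))) ⟪f', b - a⟫ 0 :=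
    HasGradientAt.hasDerivAt_comp_add_smul (by simpa using hgrad)
  have := hline.le_slope_of_hasDerivAt (mem_univ 0) (mem_univ 1) one_pos hderiv
  simp only [slope_def_field, one_smul, add_sub_cancel, zero_smul, add_zero, sub_zero, div_one]
    at this
  linarith

lemma le_add_inner_add_half_mul_sq_norm_of_lipschitz_gradient {f : E → ℝ} {f' : E → E} {L : ℝ}
    (hgrad : ∀ u, HasGradientAt f (f' u) u) (hLip : ∀ u v, ‖f' u - f' v‖ ≤ L * ‖u - v‖)
    (a b : E) : f b ≤ f a + ⟪f' a, b - a⟫ + L / 2 * ‖b - a‖ ^ 2 := by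
  set v := b - a
  let h : ℝ → ℝ := fun t => f (a + t • v) - t * ⟪f' a, v⟫ - L / 2 * ‖v‖ ^ 2 * t ^ 2
  have hderiv : ∀ t, HasDerivAt h (⟪f' (a + t • v), v⟫ - ⟪f' a, v⟫ - L * ‖v‖ ^ 2 * t) t := by
    intro t
    have hquad : HasDerivAt (fun t : ℝ => L / 2 * ‖v‖ ^ 2 * t ^ 2) (L * ‖v‖ ^ 2 * t) t :=
      ((hasDerivAt_pow 2 t).const_mul _).congr_deriv (by push_cast; ring)
    exact (((hgrad _).hasDerivAt_comp_add_smul).sub ((hasDerivAt_id t).mul_const _)).sub hquad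
      |>.congr_deriv (by simp)
  have hgrowth : ∀ t, 0 ≤ t → ⟪f' (a + t • v), v⟫ - ⟪f' a, v⟫ ≤ L * ‖v‖ ^ 2 * t := by
    intro t ht
    calc ⟪f' (a + t • v), v⟫ - ⟪f' a, v⟫ = ⟪f' (a + t • v) - f' a, v⟫ := (inner_sub_left ..).symm
      _ ≤ ‖f' (a + t • v) - f' a‖ * ‖v‖ := real_inner_le_norm _ _
      _ ≤ L * ‖t • v‖ * ‖v‖ :=
        mul_le_mul_of_nonneg_right (by simpa using hLip (a + t • v) a) (norm_nonneg v)
      _ = L * ‖v‖ ^ 2 * t := by rw [norm_smul, Real.norm_of_nonneg ht]; ring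
  have hanti : AntitoneOn h (Icc 0 1) :=
    antitoneOn_of_hasDerivWithinAt_nonpos (convex_Icc 0 1)
      (fun t _ => (hderiv t).continuousAt.continuousWithinAt)
      (fun t _ => (hderiv t).hasDerivWithinAt)
      (fun t ht => by linarith [hgrowth t (interior_subset ht).1])
  have := hanti (left_mem_Icc.2 zero_le_one) (right_mem_Icc.2 zero_le_one) zero_le_one
  simp only [h, v, zero_smul, add_zero, one_smul, add_sub_cancel] at this
  linarith

theorem one_step_inexact_prox_gradient_inequality_general
    {d : ℕ} (X : Set (EuclideanSpace ℝ (Fin d))) (hX : Convex ℝ X)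
    (f : EuclideanSpace ℝ (Fin d) → ℝ)
    (gradf : EuclideanSpace ℝ (Fin d) → EuclideanSpace ℝ (Fin d))
    (hgrad : ∀ u, HasGradientAt f (gradf u) u)
    (hconv : ConvexOn ℝ Set.univ f)
    (L : ℝ)
    (hLip : ∀ u v, ‖gradf u - gradf v‖ ≤ L * ‖u - v‖)
    (φ : EuclideanSpace ℝ (Fin d) → ℝ) (hφ : ConvexOn ℝ X φ)
    (y : EuclideanSpace ℝ (Fin d))
    (G : EuclideanSpace ℝ (Fin d))
    (α : ℝ)
    (z : EuclideanSpace ℝ (Fin d)) (hzX : z ∈ X)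
    (hz : ∀ x ∈ X,
      f y + ⟪G, z - y⟫ + (1 / (2 * α)) * ‖z - y‖ ^ 2 + φ z
        ≤ f y + ⟪G, x - y⟫ + (1 / (2 * α)) * ‖x - y‖ ^ 2 + φ x) :
    ∀ x ∈ X,
      f z + φ z ≤ f x + φ x + (1 / (2 * α)) * ‖x - y‖ ^ 2 - (1 / (2 * α)) * ‖x - z‖ ^ 2
        + ((L - 1 / α) / 2) * ‖z - y‖ ^ 2 + ⟪G - gradf y, x - z⟫ := by
  intro x hx
  have hhalf : 1 / (2 * α) = 1 / α / 2 := by ring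
  rw [hhalf] at hz ⊢
  have hprox : 1 / α / 2 * ‖z - y‖ ^ 2 + ⟪G, z - y⟫ + φ z + 1 / α / 2 * ‖x - z‖ ^ 2
      ≤ 1 / α / 2 * ‖x - y‖ ^ 2 + ⟪G, x - y⟫ + φ x := by
    have hstrong :
        StrongConvexOn X (1 / α) fun u => 1 / α / 2 * ‖u - y‖ ^ 2 + ⟪G, u - y⟫ + φ u :=
      ((strongConvexOn_half_mul_sq_norm_sub hX _ y).add_convexOn
        (convexOn_inner_sub hX G y)).add_convexOn hφ
    exact hstrong.add_half_mul_sq_norm_sub_le_of_isMinOn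
      (isMinOn_iff.2 fun u hu => by linarith [hz u hu]) hzX hx
  have hsmooth := le_add_inner_add_half_mul_sq_norm_of_lipschitz_gradient hgrad hLip y z
  have hfirst := hconv.add_inner_le_of_hasGradientAt (hgrad y) x
  have hsplit (w : EuclideanSpace ℝ (Fin d)) : ⟪w, x - y⟫ = ⟪w, x - z⟫ + ⟪w, z - y⟫ := by
    rw [← inner_add_right, sub_add_sub_cancel]
  rw [inner_sub_left]
  linarith [hsplit G, hsplit (gradf y)]

/-- Key one-step inequality for the inexact proximal-gradient/FISTA step: with
`z = argmin_{x ∈ X} { f(y) + ⟨G, x - y⟩ + (1/(2α))‖x - y‖² + φ(x) }` and `ε = G - ∇f(y)`,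
for every `x ∈ X`,
`g(z) ≤ g(x) + (1/(2α))‖x-y‖² - (1/(2α))‖x-z‖² + ((L - 1/α)/2)‖z-y‖² + ⟨ε, x - z⟩`. -/
theorem one_step_inexact_prox_gradient_inequality
    {d : ℕ} (X : Set (EuclideanSpace ℝ (Fin d))) (hXc : IsClosed X) (hX : Convex ℝ X)
    (f : EuclideanSpace ℝ (Fin d) → ℝ)
    (gradf : EuclideanSpace ℝ (Fin d) → EuclideanSpace ℝ (Fin d))
    (hgrad : ∀ u, HasGradientAt f (gradf u) u)
    (hconv : ConvexOn ℝ Set.univ f)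
    (L : ℝ) (hL : 0 < L)
    (hLip : ∀ u v, ‖gradf u - gradf v‖ ≤ L * ‖u - v‖)
    (φ : EuclideanSpace ℝ (Fin d) → ℝ) (hφ : ConvexOn ℝ X φ)
    (xstar : EuclideanSpace ℝ (Fin d)) (hxstarX : xstar ∈ X)
    (hmin : ∀ u ∈ X, f xstar + φ xstar ≤ f u + φ u)
    (y : EuclideanSpace ℝ (Fin d)) (hy : y ∈ X)
    (G : EuclideanSpace ℝ (Fin d))
    (α : ℝ) (hα0 : 0 < α) (hαL : α < 1 / L)
    (z : EuclideanSpace ℝ (Fin d)) (hzX : z ∈ X)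
    (hz : ∀ x ∈ X,
      f y + ⟪G, z - y⟫ + (1 / (2 * α)) * ‖z - y‖ ^ 2 + φ z
        ≤ f y + ⟪G, x - y⟫ + (1 / (2 * α)) * ‖x - y‖ ^ 2 + φ x) :
    ∀ x ∈ X,
      f z + φ z ≤ f x + φ x + (1 / (2 * α)) * ‖x - y‖ ^ 2 - (1 / (2 * α)) * ‖x - z‖ ^ 2
        + ((L - 1 / α) / 2) * ‖z - y‖ ^ 2 + ⟪G - gradf y, x - z⟫ :=
  one_step_inexact_prox_gradient_inequality_general X hX f gradf hgrad hconv L hLip φ hφ y G α z hzX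
    hz
end

section
/- Let A : Ξ → ℝ^{d×d} be a random matrix with square-integrable entries, b : Ξ → ℝ^d integrable, and define F(x,ξ) = (1/2)⟨x, A(ξ)x⟩ + ⟨b(ξ), x⟩ with ∇F(x,ξ) = (1/2)(A(ξ) + A(ξ)ᵀ)x + b(ξ). Suppose ∇f(x) = E[∇F(x,ξ)]. Define σ(x)² = E[‖∇F(x,ξ) − ∇f(x)‖²] and suppose b is deterministic and A(ξ) symmetric a.s. Let B = ∑_{i=1}^d Cov[A_i(ξ)] where A_i(ξ) is the i-th row of A(ξ). Then σ(x)² = ⟨x, Bx⟩ for all x ∈ ℝ^d, and consequently σ(x)² ≥ λ₊(B)‖x_B‖² where λ₊(B) is the smallest nonzero eigenvalue of B and x_B is the orthogonal projection of x onto the orthogonal complement of the kernel of B. -/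
open MeasureTheory ProbabilityTheory Real Matrix
open scoped RealInnerProductSpace

/-! With `D ω = A ω - Abar`, the squared deviation is `‖D x‖² = ⟨x, DᵀD x⟩`, and integrating
entrywise gives `⟨x, B x⟩` since `B = ∫ DᵀD`. As `B` is symmetric, `⟨x, B x⟩ = ∑ μᵢ ⟨eᵢ, x⟩²`
in an orthonormal eigenbasis; the component of `x` in `ker B` does not contribute, and every
remaining coordinate, which is a coordinate of `x_B`, carries a nonzero eigenvalue `μᵢ ≥ λ₊`. -/

section RandomMatrix

variable {Ω : Type*} [MeasurableSpace Ω] {μ : Measure Ω} {m n : Type*} [Fintype m] [Fintype n]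

theorem integral_dotProduct_mulVec {M : Ω → Matrix n n ℝ}
    (hM : ∀ j k, Integrable (fun ω => M ω j k) μ) (x : n → ℝ) :
    ∫ ω, x ⬝ᵥ (M ω *ᵥ x) ∂μ = x ⬝ᵥ (of (fun j k => ∫ ω, M ω j k ∂μ) *ᵥ x) := by
  simp only [dotProduct, mulVec, of_apply]
  rw [integral_finsetSum _ fun j _ => (integrable_finsetSum _ fun k _ =>
    (hM j k).mul_const _).const_mul _]
  refine Finset.sum_congr rfl fun j _ => ?_
  rw [integral_const_mul, integral_finsetSum _ fun k _ => (hM j k).mul_const _]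
  simp only [integral_mul_const]

theorem Matrix.sum_mulVec_sq (D : Matrix m n ℝ) (x : n → ℝ) :
    ∑ i, (D *ᵥ x) i ^ 2 = x ⬝ᵥ ((Dᵀ * D) *ᵥ x) := by
  rw [← mulVec_mulVec, dotProduct_mulVec, vecMul_transpose]
  simp only [dotProduct, sq]

theorem integral_sum_mulVec_sq {D : Ω → Matrix m n ℝ}
    (hD : ∀ i j, MemLp (fun ω => D ω i j) 2 μ) (x : n → ℝ) :
    ∫ ω, ∑ i, (D ω *ᵥ x) i ^ 2 ∂μ =
      x ⬝ᵥ (of (fun j k => ∑ i, ∫ ω, D ω i j * D ω i k ∂μ) *ᵥ x) := by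
  have hprod : ∀ i j k, Integrable (fun ω => D ω i j * D ω i k) μ :=
    fun i j k => (hD i j).integrable_mul (hD i k)
  simp_rw [Matrix.sum_mulVec_sq]
  have hentry : ∀ ω j k, ((D ω)ᵀ * D ω) j k = ∑ i, D ω i j * D ω i k := fun ω j k => by
    simp only [mul_apply, transpose_apply]
  rw [integral_dotProduct_mulVec fun j k => (integrable_finsetSum _ fun i _ => hprod i j k).congr
    (ae_of_all _ fun ω => (hentry ω j k).symm)]
  congr 2
  ext j k
  simp only [hentry, of_apply]
  exact integral_finsetSum _ fun i _ => hprod i j k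

end RandomMatrix

section Spectral

variable {E : Type*} [NormedAddCommGroup E] [InnerProductSpace ℝ E] [FiniteDimensional ℝ E]
  {T : E →ₗ[ℝ] E} {lam : ℝ}

theorem LinearMap.IsSymmetric.mul_norm_sq_le_inner_of_mem_orthogonal_ker (hT : T.IsSymmetric)
    (hlam : ∀ μ, Module.End.HasEigenvalue T μ → μ ≠ 0 → lam ≤ μ) {y : E}
    (hy : y ∈ (LinearMap.ker T)ᗮ) : lam * ‖y‖ ^ 2 ≤ ⟪y, T y⟫ := by
  obtain ⟨e, ev, happ, hev⟩ : ∃ (e : OrthonormalBasis (Fin (Module.finrank ℝ E)) ℝ E)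
      (ev : Fin (Module.finrank ℝ E) → ℝ),
      (∀ i, T (e i) = ev i • e i) ∧ ∀ i, Module.End.HasEigenvalue T (ev i) :=
    ⟨hT.eigenvectorBasis rfl, hT.eigenvalues rfl, hT.apply_eigenvectorBasis rfl,
      hT.hasEigenvalue_eigenvalues rfl⟩
  have hcoord : ∀ i, lam * ⟪e i, y⟫ ^ 2 ≤ ev i * ⟪e i, y⟫ ^ 2 := by
    intro i
    by_cases hev0 : ev i = 0
    · have hker : e i ∈ LinearMap.ker T := by
        rw [LinearMap.mem_ker, happ, hev0, zero_smul]
      simp [hy _ hker]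
    · exact mul_le_mul_of_nonneg_right (hlam _ (hev i) hev0) (sq_nonneg _)
  calc lam * ‖y‖ ^ 2 = ∑ i, lam * ⟪e i, y⟫ ^ 2 := by
        rw [← real_inner_self_eq_norm_sq, ← e.sum_inner_mul_inner y y, Finset.mul_sum]
        simp only [real_inner_comm y, sq]
    _ ≤ ∑ i, ev i * ⟪e i, y⟫ ^ 2 := Finset.sum_le_sum fun i _ => hcoord i
    _ = ⟪y, T y⟫ := by
        rw [← e.sum_inner_mul_inner y (T y)]
        refine Finset.sum_congr rfl fun i _ => ?_
        rw [← hT, happ, real_inner_smul_left, real_inner_comm y]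
        ring

theorem LinearMap.IsSymmetric.inner_starProjection_orthogonal_ker (hT : T.IsSymmetric) (x : E) :
    ⟪(LinearMap.ker T)ᗮ.starProjection x, T ((LinearMap.ker T)ᗮ.starProjection x)⟫ =
      ⟪x, T x⟫ := by
  have hTP : T ((LinearMap.ker T)ᗮ.starProjection x) = T x := by
    rw [Submodule.starProjection_orthogonal_val, map_sub,
      LinearMap.mem_ker.mp ((LinearMap.ker T).starProjection_apply_mem x), sub_zero]
  calc _ = ⟪(LinearMap.ker T)ᗮ.starProjection x, T x⟫ := by rw [hTP]
    _ = ⟪T ((LinearMap.ker T)ᗮ.starProjection x), x⟫ := (hT _ _).symm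
    _ = ⟪x, T x⟫ := by rw [hTP, hT]

theorem LinearMap.IsSymmetric.mul_norm_starProjection_orthogonal_ker_sq_le_inner
    (hT : T.IsSymmetric) (hlam : ∀ μ, Module.End.HasEigenvalue T μ → μ ≠ 0 → lam ≤ μ) (x : E) :
    lam * ‖(LinearMap.ker T)ᗮ.starProjection x‖ ^ 2 ≤ ⟪x, T x⟫ :=
  hT.inner_starProjection_orthogonal_ker x ▸
    hT.mul_norm_sq_le_inner_of_mem_orthogonal_ker hlam (Submodule.starProjection_apply_mem _ x)

end Spectral

theorem Matrix.inner_toEuclideanLin_self {n : Type*} [Fintype n] [DecidableEq n]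
    (M : Matrix n n ℝ) (x : EuclideanSpace ℝ n) :
    ⟪x, toEuclideanLin M x⟫ = x ⬝ᵥ (M *ᵥ x) :=
  dotProduct_comm _ _

theorem random_quadratic_oracle_variance_general
    {d : ℕ} {Ω : Type*} [MeasureSpace Ω] [IsProbabilityMeasure (ℙ : Measure Ω)]
    (A : Ω → Matrix (Fin d) (Fin d) ℝ)
    (hA : ∀ i j, MemLp (fun ω => A ω i j) 2 ℙ)
    (Abar : Matrix (Fin d) (Fin d) ℝ)
    (B : Matrix (Fin d) (Fin d) ℝ)
    (hB : ∀ j k, B j k = ∑ i, ∫ ω, (A ω i j - Abar i j) * (A ω i k - Abar i k))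
    (σ2 : (Fin d → ℝ) → ℝ)
    (hσ2 : ∀ x : Fin d → ℝ,
      σ2 x = ∫ ω, ∑ i, ((A ω).mulVec x i - Abar.mulVec x i) ^ 2)
    (lamPlus : ℝ)
    (hlam : ∀ (μ : ℝ) (v : EuclideanSpace ℝ (Fin d)), v ≠ 0 →
      Matrix.toEuclideanLin B v = μ • v → μ ≠ 0 → lamPlus ≤ μ) :
    ∀ x : EuclideanSpace ℝ (Fin d),
      σ2 x = dotProduct x (B.mulVec x) ∧
      lamPlus * ‖(Submodule.orthogonalProjection (LinearMap.ker (Matrix.toEuclideanLin B))ᗮ x :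
          EuclideanSpace ℝ (Fin d))‖ ^ 2 ≤ σ2 x := by
  have hvar : ∀ y : Fin d → ℝ, σ2 y = y ⬝ᵥ (B *ᵥ y) := fun y => by
    have hB' : B = of fun j k => ∑ i, ∫ ω, (A ω - Abar) i j * (A ω - Abar) i k := ext hB
    rw [hσ2, hB', ← integral_sum_mulVec_sq (D := fun ω => A ω - Abar)
      fun i j => (hA i j).sub (memLp_const _)]
    simp only [sub_mulVec, Pi.sub_apply]
  have hBsymm : (toEuclideanLin B).IsSymmetric :=
    isSymmetric_toEuclideanLin_iff.mpr <| isHermitian_iff_isSymm.mpr <| IsSymm.ext fun j k => by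
      simp only [hB, mul_comm]
  have hlam_eigen : ∀ μ, Module.End.HasEigenvalue (toEuclideanLin B) μ → μ ≠ 0 → lamPlus ≤ μ := by
    intro μ hμ hμ0
    obtain ⟨v, hv⟩ := hμ.exists_hasEigenvector
    exact hlam μ v hv.2 (Module.End.mem_eigenspace_iff.mp hv.1) hμ0
  intro x
  refine ⟨hvar x, ?_⟩
  rw [hvar, ← inner_toEuclideanLin_self]
  exact hBsymm.mul_norm_starProjection_orthogonal_ker_sq_le_inner hlam_eigen x

/-- Stochastic quadratic optimization with a random matrix (Example 1.1): for
`F(x,ξ) = (1/2)⟨x, A(ξ)x⟩ + ⟨b, x⟩` with `A(ξ)` a.s. symmetric, square-integrable entries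
and `b` deterministic, the pointwise oracle variance satisfies `σ(x)² = ⟨x, Bx⟩` with
`B = ∑ᵢ Cov[Aᵢ(ξ)]`, and `σ(x)² ≥ λ₊(B)‖x_B‖²` where `λ₊(B)` lower-bounds every nonzero
eigenvalue of `B` and `x_B` is the orthogonal projection of `x` onto `(ker B)ᗮ`. -/
theorem random_quadratic_oracle_variance
    {d : ℕ} {Ω : Type*} [MeasureSpace Ω] [IsProbabilityMeasure (ℙ : Measure Ω)]
    (A : Ω → Matrix (Fin d) (Fin d) ℝ)
    (hA : ∀ i j, MemLp (fun ω => A ω i j) 2 ℙ)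
    (hsym : ∀ᵐ ω ∂ℙ, (A ω)ᵀ = A ω)
    (bvec : Fin d → ℝ)
    (Abar : Matrix (Fin d) (Fin d) ℝ) (hAbar : ∀ i j, Abar i j = ∫ ω, A ω i j)
    (B : Matrix (Fin d) (Fin d) ℝ)
    (hB : ∀ j k, B j k = ∑ i, ∫ ω, (A ω i j - Abar i j) * (A ω i k - Abar i k))
    (σ2 : (Fin d → ℝ) → ℝ)
    (hσ2 : ∀ x : Fin d → ℝ,
      σ2 x = ∫ ω, ∑ i, ((A ω).mulVec x i - Abar.mulVec x i) ^ 2)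
    (lamPlus : ℝ) (hlamPlus : 0 ≤ lamPlus)
    (hlam : ∀ (μ : ℝ) (v : EuclideanSpace ℝ (Fin d)), v ≠ 0 →
      Matrix.toEuclideanLin B v = μ • v → μ ≠ 0 → lamPlus ≤ μ) :
    ∀ x : EuclideanSpace ℝ (Fin d),
      σ2 x = dotProduct x (B.mulVec x) ∧
      lamPlus * ‖(Submodule.orthogonalProjection (LinearMap.ker (Matrix.toEuclideanLin B))ᗮ x :
          EuclideanSpace ℝ (Fin d))‖ ^ 2 ≤ σ2 x :=
  random_quadratic_oracle_variance_general A hA Abar B hB σ2 hσ2 lamPlus hlam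
end
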